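/- Let σ be a linear ordering of the vertex set of a finite graph G and let t ≥ 1. If E(G) can be partitioned into t parts each of which is a queue with respect to σ (no part contains two independent nested edges), then the adjacency matrix A_σ(G), with rows and columns ordered by σ, is 2(t+1)-grid free. The same conclusion holds if E(G) can be partitioned into t parts each of which is a stack with respect to σ (no part contains two independent overlapping edges). -/
import Mathlib


/-- A partition (given by `q`) of the edges of `G` into `t` queues with respect to the natural
order on `Fin N`: no part contains an independent nested pair of edges. -/
def IsQueuePartition {N t : ℕ} (G : SimpleGraph (Fin N)) (q : Fin N → Fin N → Fin t) : Prop :=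
  (∀ u v, q u v = q v u) ∧
  ∀ u v x y : Fin N, G.Adj u v → G.Adj x y → q u v = q x y →
    u < x → x < y → y < v → False

/-- A partition (given by `q`) of the edges of `G` into `t` stacks with respect to the natural
order on `Fin N`: no part contains an independent overlapping pair of edges. -/
def IsStackPartition {N t : ℕ} (G : SimpleGraph (Fin N)) (q : Fin N → Fin N → Fin t) : Prop :=
  (∀ u v, q u v = q v u) ∧
  ∀ u v x y : Fin N, G.Adj u v → G.Adj x y → q u v = q x y →
    u < x → x < v → v < y → False

/-- A `k`-grid minor of a matrix `M` (with `True` marking the nonzero entries): a partition of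
the rows into `k` intervals of consecutive rows and of the columns into `k` intervals of
consecutive columns such that every one of the `k²` zones contains a nonzero entry. -/
def HasGridMinor {m n : ℕ} (M : Fin m → Fin n → Prop) (k : ℕ) : Prop :=
  ∃ (r c : Fin (k + 1) → ℕ),
    Monotone r ∧ r 0 = 0 ∧ r (Fin.last k) = m ∧
    Monotone c ∧ c 0 = 0 ∧ c (Fin.last k) = n ∧
    ∀ i j : Fin k, ∃ (x : Fin m) (y : Fin n),
      r i.castSucc ≤ (x : ℕ) ∧ (x : ℕ) < r i.succ ∧
      c j.castSucc ≤ (y : ℕ) ∧ (y : ℕ) < c j.succ ∧ M x y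

lemma key (N t : ℕ) (M : Fin N → Fin N → Prop)
    (r c : Fin (2 * (t + 1) + 1) → ℕ) (hr : Monotone r) (hc : Monotone c)
    (hrc : r ⟨t + 1, by omega⟩ ≤ c ⟨t + 1, by omega⟩)
    (hz : ∀ i j : Fin (2 * (t + 1)), ∃ x y : Fin N,
      r i.castSucc ≤ (x : ℕ) ∧ (x : ℕ) < r i.succ ∧
      c j.castSucc ≤ (y : ℕ) ∧ (y : ℕ) < c j.succ ∧ M x y) :
    (∃ f g : Fin (t + 1) → Fin N, (∀ s, M (f s) (g s)) ∧
      ∀ s s' : Fin (t + 1), s < s' → f s < f s' ∧ g s' < g s ∧ f s' < g s') ∧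
    (∃ f g : Fin (t + 1) → Fin N, (∀ s, M (f s) (g s)) ∧
      ∀ s s' : Fin (t + 1), s < s' → f s < f s' ∧ g s < g s' ∧ f s' < g s) := by
  choose X Y h1 h2 h3 h4 h5 using hz
  have hsl : ∀ s : Fin (t + 1), (s : ℕ) < 2 * (t + 1) := fun s => by
    have := s.isLt; omega
  have hsl2 : ∀ s : Fin (t + 1), 2 * (t + 1) - 1 - (s : ℕ) < 2 * (t + 1) := fun s => by
    have := s.isLt; omega
  have hsl3 : ∀ s : Fin (t + 1), t + 1 + (s : ℕ) < 2 * (t + 1) := fun s => by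
    have := s.isLt; omega
  have hrle : ∀ a b : ℕ, (ha : a < 2 * (t + 1) + 1) → (hb : b < 2 * (t + 1) + 1) → a ≤ b →
      r ⟨a, ha⟩ ≤ r ⟨b, hb⟩ := fun a b ha hb hab => hr hab
  have hcle : ∀ a b : ℕ, (ha : a < 2 * (t + 1) + 1) → (hb : b < 2 * (t + 1) + 1) → a ≤ b →
      c ⟨a, ha⟩ ≤ c ⟨b, hb⟩ := fun a b ha hb hab => hc hab
  constructor
  · -- nested chain: zones (s, k-1-s)
    refine ⟨fun s => X ⟨s, hsl s⟩ ⟨2 * (t + 1) - 1 - s, hsl2 s⟩,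
            fun s => Y ⟨s, hsl s⟩ ⟨2 * (t + 1) - 1 - s, hsl2 s⟩, fun s => h5 _ _, ?_⟩
    intro s s' hss
    have hs := s.isLt; have hs' := s'.isLt
    have hss' : (s : ℕ) < (s' : ℕ) := hss
    refine ⟨?_, ?_, ?_⟩
    · rw [Fin.lt_def]
      calc ((X ⟨s, hsl s⟩ ⟨2*(t+1)-1-s, hsl2 s⟩ : Fin N) : ℕ)
          < r ⟨(s:ℕ)+1, by omega⟩ := h2 _ _
        _ ≤ r ⟨(s':ℕ), by omega⟩ := hrle _ _ _ _ (by omega)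
        _ ≤ _ := h1 ⟨s', hsl s'⟩ _
    · rw [Fin.lt_def]
      calc ((Y ⟨s', hsl s'⟩ ⟨2*(t+1)-1-s', hsl2 s'⟩ : Fin N) : ℕ)
          < c ⟨2*(t+1)-1-(s':ℕ)+1, by omega⟩ := h4 _ _
        _ ≤ c ⟨2*(t+1)-1-(s:ℕ), by omega⟩ := hcle _ _ _ _ (by omega)
        _ ≤ _ := h3 _ ⟨2 * (t + 1) - 1 - s, hsl2 s⟩
    · rw [Fin.lt_def]
      calc ((X ⟨s', hsl s'⟩ ⟨2*(t+1)-1-s', hsl2 s'⟩ : Fin N) : ℕ)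
          < r ⟨(s':ℕ)+1, by omega⟩ := h2 _ _
        _ ≤ r ⟨t + 1, by omega⟩ := hrle _ _ _ _ (by omega)
        _ ≤ c ⟨t + 1, by omega⟩ := hrc
        _ ≤ c ⟨2*(t+1)-1-(s':ℕ), by omega⟩ := hcle _ _ _ _ (by omega)
        _ ≤ _ := h3 _ ⟨2 * (t + 1) - 1 - s', hsl2 s'⟩
  · -- overlapping chain: zones (s, t+1+s)
    refine ⟨fun s => X ⟨s, hsl s⟩ ⟨t + 1 + s, hsl3 s⟩,
            fun s => Y ⟨s, hsl s⟩ ⟨t + 1 + s, hsl3 s⟩, fun s => h5 _ _, ?_⟩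
    intro s s' hss
    have hs := s.isLt; have hs' := s'.isLt
    have hss' : (s : ℕ) < (s' : ℕ) := hss
    refine ⟨?_, ?_, ?_⟩
    · rw [Fin.lt_def]
      calc ((X ⟨s, hsl s⟩ ⟨t+1+s, hsl3 s⟩ : Fin N) : ℕ)
          < r ⟨(s:ℕ)+1, by omega⟩ := h2 _ _
        _ ≤ r ⟨(s':ℕ), by omega⟩ := hrle _ _ _ _ (by omega)
        _ ≤ _ := h1 ⟨s', hsl s'⟩ _
    · rw [Fin.lt_def]
      calc ((Y ⟨s, hsl s⟩ ⟨t+1+s, hsl3 s⟩ : Fin N) : ℕ)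
          < c ⟨t+1+(s:ℕ)+1, by omega⟩ := h4 _ _
        _ ≤ c ⟨t+1+(s':ℕ), by omega⟩ := hcle _ _ _ _ (by omega)
        _ ≤ _ := h3 _ ⟨t + 1 + s', hsl3 s'⟩
    · rw [Fin.lt_def]
      calc ((X ⟨s', hsl s'⟩ ⟨t+1+s', hsl3 s'⟩ : Fin N) : ℕ)
          < r ⟨(s':ℕ)+1, by omega⟩ := h2 _ _
        _ ≤ r ⟨t + 1, by omega⟩ := hrle _ _ _ _ (by omega)
        _ ≤ c ⟨t + 1, by omega⟩ := hrc
        _ ≤ c ⟨t+1+(s:ℕ), by omega⟩ := hcle _ _ _ _ (by omega)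
        _ ≤ _ := h3 _ ⟨t + 1 + s, hsl3 s⟩

/-- if the edges of `G` can be partitioned into `t` queues (or `t` stacks) with
respect to the vertex ordering, then the adjacency matrix in that ordering is
`2(t+1)`-grid free. -/
theorem queue_or_stack_partition_grid_free (N t : ℕ) (ht : 1 ≤ t) (G : SimpleGraph (Fin N))
    (q : Fin N → Fin N → Fin t)
    (h : IsQueuePartition G q ∨ IsStackPartition G q) :
    ¬ HasGridMinor (fun i j : Fin N => G.Adj i j) (2 * (t + 1)) := by
  rintro ⟨r, c, hr, hr0, hrl, hc, hc0, hcl, hz⟩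
  have main : ∀ (r c : Fin (2*(t+1)+1) → ℕ), Monotone r → Monotone c →
      r ⟨t+1, by omega⟩ ≤ c ⟨t+1, by omega⟩ →
      (∀ i j : Fin (2*(t+1)), ∃ x y : Fin N,
        r i.castSucc ≤ (x:ℕ) ∧ (x:ℕ) < r i.succ ∧
        c j.castSucc ≤ (y:ℕ) ∧ (y:ℕ) < c j.succ ∧ G.Adj x y) → False := by
    intro r c hr hc hrc hz
    obtain ⟨hnest, hover⟩ := key N t (fun a b => G.Adj a b) r c hr hc hrc hz
    rcases h with hq | hs
    · obtain ⟨f, g, hM, hch⟩ := hnest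
      obtain ⟨s, s', hne, heq⟩ := Fintype.exists_ne_map_eq_of_card_lt
        (fun s : Fin (t+1) => q (f s) (g s)) (by simp)
      rcases lt_or_gt_of_ne hne with hlt | hlt
      · obtain ⟨a1, a2, a3⟩ := hch s s' hlt
        exact hq.2 (f s) (g s) (f s') (g s') (hM s) (hM s') heq a1 a3 a2
      · obtain ⟨a1, a2, a3⟩ := hch s' s hlt
        exact hq.2 (f s') (g s') (f s) (g s) (hM s') (hM s) heq.symm a1 a3 a2
    · obtain ⟨f, g, hM, hch⟩ := hover
      obtain ⟨s, s', hne, heq⟩ := Fintype.exists_ne_map_eq_of_card_lt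
        (fun s : Fin (t+1) => q (f s) (g s)) (by simp)
      rcases lt_or_gt_of_ne hne with hlt | hlt
      · obtain ⟨a1, a2, a3⟩ := hch s s' hlt
        exact hs.2 (f s) (g s) (f s') (g s') (hM s) (hM s') heq a1 a3 a2
      · obtain ⟨a1, a2, a3⟩ := hch s' s hlt
        exact hs.2 (f s') (g s') (f s) (g s) (hM s') (hM s) heq.symm a1 a3 a2
  rcases le_total (r ⟨t+1, by omega⟩) (c ⟨t+1, by omega⟩) with hle | hle
  · exact main r c hr hc hle hz
  · exact main c r hc hr hle (fun i j => by
      obtain ⟨x, y, a1, a2, a3, a4, a5⟩ := hz j i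
      exact ⟨y, x, a3, a4, a1, a2, a5.symm⟩)
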